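/- Let u be a Lipschitz function on ℂⁿ with sup|u| + sup|∇u| < ∞, and let [u]_r(z) denote the average of u over the Euclidean ball B_r(z). If u is subharmonic with inf u = 0 and sup u = 1, then for every z ∈ ℂⁿ, lim_{r→∞} [u]_r(z) = 1 and lim_{r→∞} [u²]_r(z) = 1. -/

import Mathlib

open MeasureTheory

/-- Lebesgue measure on `ℂⁿ` with the Euclidean metric. -/
noncomputable instance (m : ℕ) : MeasureSpace (EuclideanSpace ℂ (Fin m)) :=
  letI : MeasurableSpace (EuclideanSpace ℂ (Fin m)) :=
    MeasurableSpace.comap (WithLp.ofLp (p := 2)) (inferInstance : MeasurableSpace (Fin m → ℂ))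
  ⟨Measure.map (WithLp.toLp 2) (volume : Measure (Fin m → ℂ))⟩

/-!
If `u ≥ 0` has the sub-mean value property and `dist w z < r`, the ball `B(w, r - dist w z)` lies
inside `B(z, r)`, so `⨍_{B(z,r)} u ≥ ((r - dist w z) / r) ^ dim * u w`. Letting `r → ∞`, the
averages eventually exceed every value of `u`, while they never exceed `sup u`; hence they tend to
`sup u = 1`. Since `0 ≤ u ≤ 1`, the pointwise bounds `2u - 1 ≤ u² ≤ u` squeeze the averages
of `u²`.
-/

open Measure Metric Filter Set Topology Module

section SetAverage

variable {α : Type*} [MeasurableSpace α] {μ : Measure α} {s t : Set α} {f g : α → ℝ}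

theorem setAverage_mono_on (hf : IntegrableOn f s μ) (hg : IntegrableOn g s μ)
    (hs : MeasurableSet s) (h : ∀ x ∈ s, f x ≤ g x) :
    ⨍ x in s, f x ∂μ ≤ ⨍ x in s, g x ∂μ := by
  simp only [setAverage_eq, smul_eq_mul]
  exact mul_le_mul_of_nonneg_left (setIntegral_mono_on hf hg hs h) (by positivity)

theorem setAverage_le_of_forall_le {c : ℝ} (hs₀ : μ s ≠ 0) (hs : μ s ≠ ⊤)
    (hsm : MeasurableSet s) (hf : IntegrableOn f s μ) (h : ∀ x ∈ s, f x ≤ c) :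
    ⨍ x in s, f x ∂μ ≤ c := by
  simpa only [setAverage_const hs₀ hs] using
    setAverage_mono_on hf (integrableOn_const hs) hsm h

theorem measureReal_div_mul_setAverage_le_setAverage (hst : s ⊆ t) (hs : μ s ≠ ⊤)
    (ht : MeasurableSet t) (hf : IntegrableOn f t μ) (hf₀ : ∀ x ∈ t, 0 ≤ f x) :
    μ.real s / μ.real t * ⨍ x in s, f x ∂μ ≤ ⨍ x in t, f x ∂μ := by
  have hint : ∫ x in s, f x ∂μ ≤ ∫ x in t, f x ∂μ :=
    setIntegral_mono_set hf (ae_restrict_of_forall_mem ht hf₀) hst.eventuallyLE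
  calc μ.real s / μ.real t * ⨍ x in s, f x ∂μ
      = (μ.real t)⁻¹ * ∫ x in s, f x ∂μ := by
        rw [← measure_smul_setAverage f hs, smul_eq_mul]; ring
    _ ≤ (μ.real t)⁻¹ * ∫ x in t, f x ∂μ := by gcongr
    _ = ⨍ x in t, f x ∂μ := (setAverage_eq μ f t).symm

theorem MeasureTheory.IntegrableOn.sq_of_abs_le_one (hf : IntegrableOn f s μ)
    (hs : MeasurableSet s) (h : ∀ x ∈ s, |f x| ≤ 1) : IntegrableOn (fun x => f x ^ 2) s μ :=
  Integrable.mono hf (hf.aestronglyMeasurable.pow 2) <| ae_restrict_of_forall_mem hs fun x hx => by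
    have := abs_nonneg (f x)
    simp only [norm_pow, Real.norm_eq_abs]
    nlinarith [h x hx]

theorem setAverage_sq_le_setAverage (hs : MeasurableSet s) (hf : IntegrableOn f s μ)
    (hf₀ : ∀ x ∈ s, 0 ≤ f x) (hf₁ : ∀ x ∈ s, f x ≤ 1) :
    ⨍ x in s, f x ^ 2 ∂μ ≤ ⨍ x in s, f x ∂μ :=
  setAverage_mono_on
    (hf.sq_of_abs_le_one hs fun x hx => (abs_of_nonneg (hf₀ x hx)).trans_le (hf₁ x hx))
    hf hs fun x hx => by nlinarith [hf₀ x hx, hf₁ x hx]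

theorem two_mul_setAverage_sub_one_le_setAverage_sq (hs₀ : μ s ≠ 0) (hs : μ s ≠ ⊤)
    (hsm : MeasurableSet s) (hf : IntegrableOn f s μ)
    (hf2 : IntegrableOn (fun x => f x ^ 2) s μ) :
    2 * ⨍ x in s, f x ∂μ - 1 ≤ ⨍ x in s, f x ^ 2 ∂μ := by
  have hμs : μ.real s ≠ 0 := (measureReal_ne_zero_iff hs).2 hs₀
  have hlin : ⨍ x in s, (2 * f x - 1) ∂μ = 2 * ⨍ x in s, f x ∂μ - 1 := by
    simp only [setAverage_eq, smul_eq_mul]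
    rw [integral_sub (hf.const_mul 2) (integrableOn_const hs), integral_const_mul,
      setIntegral_const, smul_eq_mul, mul_one]
    field_simp
  rw [← hlin]
  exact setAverage_mono_on ((hf.const_mul 2).sub (integrableOn_const hs)) hf2 hsm
    fun x _ => by nlinarith [sq_nonneg (f x - 1)]

theorem tendsto_setAverage_sq_of_tendsto_setAverage {ι : Type*} {l : Filter ι} {s : ι → Set α}
    (hsm : ∀ i, MeasurableSet (s i)) (hs₀ : ∀ᶠ i in l, μ (s i) ≠ 0)
    (hs : ∀ i, μ (s i) ≠ ⊤)
    (hf : ∀ i, IntegrableOn f (s i) μ) (hf₀ : ∀ x, 0 ≤ f x) (hf₁ : ∀ x, f x ≤ 1)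
    (h : Tendsto (fun i => ⨍ x in s i, f x ∂μ) l (𝓝 1)) :
    Tendsto (fun i => ⨍ x in s i, f x ^ 2 ∂μ) l (𝓝 1) := by
  have hlower : Tendsto (fun i => 2 * ⨍ x in s i, f x ∂μ - 1) l (𝓝 1) := by
    convert (h.const_mul 2).sub_const 1 using 2
    norm_num
  refine tendsto_of_tendsto_of_tendsto_of_le_of_le' hlower h ?_
    (Eventually.of_forall fun i => setAverage_sq_le_setAverage (hsm i) (hf i)
      (fun x _ => hf₀ x) fun x _ => hf₁ x)
  filter_upwards [hs₀] with i hi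
  exact two_mul_setAverage_sub_one_le_setAverage_sq hi (hs i) (hsm i) (hf i)
    ((hf i).sq_of_abs_le_one (hsm i) fun x _ => (abs_of_nonneg (hf₀ x)).trans_le (hf₁ x))

end SetAverage

theorem MeasureTheory.LocallyIntegrable.integrableOn_ball {X : Type*} [PseudoMetricSpace X]
    [ProperSpace X] [MeasurableSpace X] {μ : Measure X} {f : X → ℝ}
    (hf : LocallyIntegrable f μ)
    (x : X) (r : ℝ) : IntegrableOn f (ball x r) μ :=
  (hf.integrableOn_isCompact (isCompact_closedBall x r)).mono_set ball_subset_closedBall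

section AddHaar

variable {E : Type*} [NormedAddCommGroup E] [NormedSpace ℝ E] [FiniteDimensional ℝ E]
  [MeasurableSpace E] [BorelSpace E] (μ : Measure E) [μ.IsAddHaarMeasure]

theorem measureReal_ball_div_measureReal_ball (x y : E) {r s : ℝ} (hr : 0 < r) (hs : 0 < s) :
    μ.real (ball x r) / μ.real (ball y s) = (r / s) ^ finrank ℝ E := by
  have hc : 0 < (μ (ball (0 : E) 1)).toReal :=
    ENNReal.toReal_pos (measure_ball_pos μ 0 one_pos).ne' measure_ball_lt_top.ne
  simp only [measureReal_def, addHaar_ball_of_pos μ _ hr, addHaar_ball_of_pos μ _ hs,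
    ENNReal.toReal_mul, ENNReal.toReal_ofReal (pow_nonneg hr.le _),
    ENNReal.toReal_ofReal (pow_nonneg hs.le _)] at hc ⊢
  rw [div_pow]
  field_simp

def HasSubMeanValueProperty (u : E → ℝ) : Prop :=
  ∀ z r, 0 < r → u z ≤ ⨍ w in ball z r, u w ∂μ

variable {μ} {u : E → ℝ}

theorem HasSubMeanValueProperty.div_pow_mul_le_setAverage_ball
    (hu : HasSubMeanValueProperty μ u) (hu₀ : ∀ x, 0 ≤ u x) (hloc : LocallyIntegrable u μ)
    {w z : E} {r : ℝ} (hr : dist w z < r) :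
    ((r - dist w z) / r) ^ finrank ℝ E * u w ≤ ⨍ x in ball z r, u x ∂μ := by
  have hrd : 0 < r - dist w z := sub_pos.2 hr
  have hr₀ : 0 < r := lt_of_le_of_lt dist_nonneg hr
  have hsub : ball w (r - dist w z) ⊆ ball z r := ball_subset_ball' (by linarith)
  calc ((r - dist w z) / r) ^ finrank ℝ E * u w
      = μ.real (ball w (r - dist w z)) / μ.real (ball z r) * u w := by
        rw [measureReal_ball_div_measureReal_ball μ w z hrd hr₀]
    _ ≤ μ.real (ball w (r - dist w z)) / μ.real (ball z r) *
          ⨍ x in ball w (r - dist w z), u x ∂μ :=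
        mul_le_mul_of_nonneg_left (hu w _ hrd) (by positivity)
    _ ≤ ⨍ x in ball z r, u x ∂μ :=
        measureReal_div_mul_setAverage_le_setAverage hsub measure_ball_lt_top.ne
          measurableSet_ball (hloc.integrableOn_ball z r) fun x _ => hu₀ x

theorem tendsto_sub_div_self_atTop (d : ℝ) :
    Tendsto (fun r : ℝ => (r - d) / r) atTop (𝓝 1) := by
  have h : Tendsto (fun r : ℝ => 1 - d / r) atTop (𝓝 1) := by
    simpa using (tendsto_const_nhds (x := (1 : ℝ))).sub
      ((tendsto_const_nhds (x := d)).div_atTop tendsto_id)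
  refine h.congr' ?_
  filter_upwards [eventually_ne_atTop 0] with r hr
  field_simp

theorem HasSubMeanValueProperty.tendsto_setAverage_ball_atTop
    (hu : HasSubMeanValueProperty μ u) (hu₀ : ∀ x, 0 ≤ u x) (hbdd : BddAbove (range u))
    (hloc : LocallyIntegrable u μ) (z : E) :
    Tendsto (fun r : ℝ => ⨍ x in ball z r, u x ∂μ) atTop (𝓝 (⨆ x, u x)) := by
  refine tendsto_order.2 ⟨fun a ha => ?_, fun a ha => ?_⟩
  · obtain ⟨w, hw⟩ := exists_lt_of_lt_ciSup ha
    have hlim :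
        Tendsto (fun r => ((r - dist w z) / r) ^ finrank ℝ E * u w) atTop (𝓝 (u w)) := by
      simpa using ((tendsto_sub_div_self_atTop (dist w z)).pow (finrank ℝ E)).mul_const (u w)
    filter_upwards [hlim.eventually (eventually_gt_nhds hw), eventually_gt_atTop (dist w z)]
      with r hlt hr
    exact hlt.trans_le (hu.div_pow_mul_le_setAverage_ball hu₀ hloc hr)
  · filter_upwards [eventually_gt_atTop 0] with r hr
    refine lt_of_le_of_lt ?_ ha
    exact setAverage_le_of_forall_le (measure_ball_pos μ z hr).ne' measure_ball_lt_top.ne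
      measurableSet_ball (hloc.integrableOn_ball z r) fun x _ => le_ciSup hbdd x

end AddHaar

instance (n : ℕ) : (volume : Measure (EuclideanSpace ℂ (Fin n))).IsAddHaarMeasure :=
  (PiLp.continuousLinearEquiv 2 ℝ (fun _ : Fin n => ℂ)).symm.isAddHaarMeasure_map
    (volume : Measure (Fin n → ℂ))

theorem stmt_16_general (n : ℕ) (u : EuclideanSpace ℂ (Fin n) → ℝ)
    (hlip : ∃ K : NNReal, LipschitzWith K u)
    (hbdd : ∃ C : ℝ, ∀ z, |u z| ≤ C)
    (hsub : ∀ z r, 0 < r → u z ≤ ⨍ w in Metric.ball z r, u w)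
    (hinf : sInf (Set.range u) = 0) (hsup : sSup (Set.range u) = 1) :
    ∀ z, Filter.Tendsto (fun r : ℝ => ⨍ w in Metric.ball z r, u w)
        Filter.atTop (nhds 1) ∧
      Filter.Tendsto (fun r : ℝ => ⨍ w in Metric.ball z r, (u w) ^ 2)
        Filter.atTop (nhds 1) := by
  obtain ⟨K, hK⟩ := hlip
  obtain ⟨C, hC⟩ := hbdd
  have hbddBelow : BddBelow (range u) := ⟨-C, forall_mem_range.2 fun x => (abs_le.1 (hC x)).1⟩
  have hbddAbove : BddAbove (range u) := ⟨C, forall_mem_range.2 fun x => (abs_le.1 (hC x)).2⟩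
  have hu₀ : ∀ x, 0 ≤ u x := fun x => hinf ▸ csInf_le hbddBelow (mem_range_self x)
  have hu₁ : ∀ x, u x ≤ 1 := fun x => hsup ▸ le_csSup hbddAbove (mem_range_self x)
  have hloc : LocallyIntegrable u volume := hK.continuous.locallyIntegrable
  intro z
  have hlim : Tendsto (fun r : ℝ => ⨍ w in ball z r, u w) atTop (𝓝 1) :=
    hsup ▸ HasSubMeanValueProperty.tendsto_setAverage_ball_atTop hsub hu₀ hbddAbove hloc z
  refine ⟨hlim, tendsto_setAverage_sq_of_tendsto_setAverage (fun _ => measurableSet_ball) ?_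
    (fun _ => measure_ball_lt_top.ne) (hloc.integrableOn_ball z) hu₀ hu₁ hlim⟩
  filter_upwards [eventually_gt_atTop 0] with r hr
  exact (measure_ball_pos volume z hr).ne'

/-- Let `u` be a bounded Lipschitz subharmonic function on `ℂⁿ` (subharmonicity expressed
by the sub-mean value inequality) with `inf u = 0` and `sup u = 1`.  Then for every `z`,
the ball averages `[u]_r(z)` and `[u²]_r(z)` tend to `1` as `r → ∞`. -/
theorem stmt_16 (n : ℕ) (hn : 1 ≤ n) (u : EuclideanSpace ℂ (Fin n) → ℝ)
    (hlip : ∃ K : NNReal, LipschitzWith K u)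
    (hbdd : ∃ C : ℝ, ∀ z, |u z| ≤ C)
    (hsub : ∀ z r, 0 < r → u z ≤ ⨍ w in Metric.ball z r, u w)
    (hinf : sInf (Set.range u) = 0) (hsup : sSup (Set.range u) = 1) :
    ∀ z, Filter.Tendsto (fun r : ℝ => ⨍ w in Metric.ball z r, u w)
        Filter.atTop (nhds 1) ∧
      Filter.Tendsto (fun r : ℝ => ⨍ w in Metric.ball z r, (u w) ^ 2)
        Filter.atTop (nhds 1) :=
  stmt_16_general n u hlip hbdd hsub hinf hsup
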